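/- Let n, k, m be positive integers with k ≥ 1 and 2 ≤ m ≤ n-k-2. The 3×3 matrix B with rows (k-1, m, n-k-m), (k, m-1, n-k-m), (k, 0, n-k-m-1) has characteristic polynomial (λ+1)(λ² + (2-n)λ + mn - mk - m² - n + 1), and its largest eigenvalue equals (n-2 + √(4m² - 4(n-k)m + n²))/2. -/
import Mathlib


open Matrix BigOperators Polynomial

/-- The spectral radius of a real matrix: the largest real eigenvalue. -/
noncomputable def specRad {V : Type*} [Fintype V] [DecidableEq V] (M : Matrix V V ℝ) : ℝ :=
  sSup {t : ℝ | Module.End.HasEigenvalue (Matrix.toLin' M) t}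

lemma eig_iff_aux11 {N : ℕ} (M : Matrix (Fin N) (Fin N) ℝ) (t : ℝ) :
    Module.End.HasEigenvalue (Matrix.toLin' M) t ↔ (M - t • 1).det = 0 := by
  rw [← Matrix.exists_mulVec_eq_zero_iff, Module.End.hasEigenvalue_iff, Submodule.ne_bot_iff]
  constructor
  · rintro ⟨v, hv, hv0⟩
    rw [Module.End.mem_eigenspace_iff, Matrix.toLin'_apply] at hv
    exact ⟨v, hv0, by rw [Matrix.sub_mulVec, Matrix.smul_mulVec, Matrix.one_mulVec, hv,
      sub_self]⟩
  · rintro ⟨v, hv0, hv⟩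
    refine ⟨v, ?_, hv0⟩
    rw [Module.End.mem_eigenspace_iff, Matrix.toLin'_apply]
    rw [Matrix.sub_mulVec, Matrix.smul_mulVec, Matrix.one_mulVec, sub_eq_zero] at hv
    exact hv

set_option maxHeartbeats 1000000 in
theorem stmt11 (n k m : ℕ) (hk : 1 ≤ k) (hm : 2 ≤ m) (hm2 : m + 2 ≤ n - k)
    (B : Matrix (Fin 3) (Fin 3) ℝ)
    (hB : B = !![(k : ℝ) - 1, (m : ℝ), (n : ℝ) - k - m;
                 (k : ℝ), (m : ℝ) - 1, (n : ℝ) - k - m;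
                 (k : ℝ), 0, (n : ℝ) - k - m - 1]) :
    B.charpoly =
      (X + C 1) * (X ^ 2 + C (2 - (n : ℝ)) * X +
        C ((m : ℝ) * n - (m : ℝ) * k - (m : ℝ) ^ 2 - (n : ℝ) + 1)) ∧
    specRad B =
      ((n : ℝ) - 2 + Real.sqrt (4 * (m : ℝ) ^ 2 - 4 * ((n : ℝ) - (k : ℝ)) * m + (n : ℝ) ^ 2)) / 2 := by
  constructor
  · subst hB
    rw [Matrix.charpoly, Matrix.det_fin_three]
    simp [charmatrix_apply, Matrix.one_apply, Matrix.vecHead, Matrix.vecTail]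
    simp only [map_sub, map_add, _root_.map_mul, _root_.map_one, map_pow, map_ofNat, C_1]
    ring
  · have hn : k + m + 2 ≤ n := by omega
    have hnr : (k : ℝ) + m + 2 ≤ n := by exact_mod_cast hn
    have hkr : (1 : ℝ) ≤ k := by exact_mod_cast hk
    have hmr : (2 : ℝ) ≤ m := by exact_mod_cast hm
    set D : ℝ := 4 * (m : ℝ) ^ 2 - 4 * ((n : ℝ) - (k : ℝ)) * m + (n : ℝ) ^ 2 with hD
    have hD0 : 0 ≤ D := by nlinarith [sq_nonneg ((n : ℝ) - 2 * m)]
    set s : ℝ := Real.sqrt D with hs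
    have hs0 : 0 ≤ s := Real.sqrt_nonneg _
    have hs2 : s ^ 2 = D := Real.sq_sqrt hD0
    set r : ℝ := ((n : ℝ) - 2 + s) / 2 with hr
    have hdet : ∀ t : ℝ, (B - t • 1).det =
        -((t + 1) * (t ^ 2 + (2 - (n : ℝ)) * t + ((m : ℝ) * n - m * k - m ^ 2 - n + 1))) := by
      intro t
      subst hB
      rw [Matrix.det_fin_three]
      simp [Matrix.one_apply, Matrix.vecHead, Matrix.vecTail]
      ring
    have hEiff : ∀ t : ℝ, Module.End.HasEigenvalue (Matrix.toLin' B) t ↔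
        (t + 1) * (t ^ 2 + (2 - (n : ℝ)) * t + ((m : ℝ) * n - m * k - m ^ 2 - n + 1)) = 0 := by
      intro t
      rw [eig_iff_aux11, hdet, neg_eq_zero]
    have hgt : IsGreatest {t : ℝ | Module.End.HasEigenvalue (Matrix.toLin' B) t} r := by
      constructor
      · rw [Set.mem_setOf_eq, hEiff]
        apply mul_eq_zero_of_right
        have : r ^ 2 + (2 - (n : ℝ)) * r + ((m : ℝ) * n - m * k - m ^ 2 - n + 1)
            = (s ^ 2 - D) / 4 := by rw [hr, hD]; ring
        rw [this, hs2, sub_self, zero_div]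
      · intro t ht
        rw [Set.mem_setOf_eq, hEiff] at ht
        rcases mul_eq_zero.1 ht with h | h
        · have : t = -1 := by linarith
          rw [this, hr]; nlinarith
        · have key : (2 * t - ((n : ℝ) - 2) - s) * (2 * t - ((n : ℝ) - 2) + s) = 0 := by
            have : (2 * t - ((n : ℝ) - 2)) ^ 2 = D := by nlinarith
            nlinarith
          rcases mul_eq_zero.1 key with h2 | h2
          · rw [hr]; linarith
          · rw [hr]; linarith
    exact hgt.csSup_eq
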